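/- arXiv:math/0501090 — 2 statements merged into one kernel-verified Lean document; each statement's English description precedes it below -/
import Mathlib

section
/- Let G be a group and A : G → SU(2) an irreducible homomorphism (i.e., the image of A is not contained in any conjugate of the circle subgroup S¹). Suppose χ : G → {±1} is a nontrivial homomorphism and u ∈ SU(2) satisfies χ(g)·A(g) = u·A(g)·u⁻¹ for all g ∈ G. Then u² = -1 and, after conjugation, the image of A is contained in the binary dihedral group S¹ ∪ j·S¹. -/
open Quaternion

/-- The group `SU(2)`, identified with the group of unit quaternions. -/
noncomputable abbrev SU2 : Type := Metric.sphere (0 : ℍ[ℝ]) 1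

/-- The quaternion `i`. -/
noncomputable def qi : ℍ[ℝ] := ⟨0,1,0,0⟩
/-- The quaternion `j`. -/
noncomputable def qj : ℍ[ℝ] := ⟨0,0,1,0⟩
/-- The quaternion `k`. -/
noncomputable def qk : ℍ[ℝ] := ⟨0,0,0,1⟩

lemma mem_SU2_of_normSq {q : ℍ[ℝ]} (h : Quaternion.normSq q = 1) :
    q ∈ Metric.sphere (0 : ℍ[ℝ]) 1 := by
  rw [mem_sphere_zero_iff_norm, norm_eq_sqrt_real_inner, Quaternion.inner_self, h]
  simp

/-- `i` as a unit quaternion. -/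
noncomputable def iSU : SU2 := ⟨qi, mem_SU2_of_normSq (by rw [Quaternion.normSq_def']; simp [qi])⟩
/-- `j` as a unit quaternion. -/
noncomputable def jSU : SU2 := ⟨qj, mem_SU2_of_normSq (by rw [Quaternion.normSq_def']; simp [qj])⟩
/-- `k` as a unit quaternion. -/
noncomputable def kSU : SU2 := ⟨qk, mem_SU2_of_normSq (by rw [Quaternion.normSq_def']; simp [qk])⟩
/-- `-1` as a unit quaternion. -/
noncomputable def negOne : SU2 := ⟨-1, by simp⟩

/-- The circle subgroup `S¹` of unit complex numbers `a + b·i` inside the unit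
quaternions. -/
noncomputable def circleSet : Set SU2 :=
  {u | (u : ℍ[ℝ]).imJ = 0 ∧ (u : ℍ[ℝ]).imK = 0}

/-- The binary dihedral group `S¹ ∪ j·S¹` inside the unit quaternions. -/
noncomputable def binDihSet : Set SU2 :=
  circleSet ∪ (fun w => jSU * w) '' circleSet

/-- A homomorphism to `SU(2)` is irreducible if its image is not contained in any
conjugate of the circle `S¹`. -/
noncomputable def IsIrredRep {G : Type*} [Group G] (A : G →* SU2) : Prop :=
  ¬ ∃ g : SU2, ∀ x : G, g * A x * g⁻¹ ∈ circleSet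

/-- The embedding of `{±1}` into the center of `SU(2)`. -/
noncomputable def sgn (s : ℤˣ) : SU2 := if s = 1 then 1 else negOne

/-!
Conjugation by `u` multiplies each `A g` by the central sign `χ g`, and `χ g ^ 2 = 1`, so `u²`
commutes with the image of `A`. The centralizer of a non-real unit quaternion is a conjugate of
`S¹`, so irreducibility forces `u² = ±1`; and `u² = 1` would make `u = ±1` central and `χ`
trivial. Hence `u² = -1`, i.e. `u` is a purely imaginary unit quaternion, conjugate to `i`.
After that conjugation every `A g` commutes with `i` (so lies in `S¹`) or anticommutes with `i`
(so lies in `j·S¹`), according to the sign `χ g`.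
-/

lemma Quaternion.re_eq_zero_of_mul_self_eq_neg_one {q : ℍ[ℝ]} (h : q * q = -1) : q.re = 0 := by
  have hre := congrArg (·.re) h
  have hI := congrArg (·.imI) h
  have hJ := congrArg (·.imJ) h
  have hK := congrArg (·.imK) h
  simp only [re_mul, imI_mul, imJ_mul, imK_mul, re_neg, imI_neg, imJ_neg, imK_neg, re_one,
    imI_one, imJ_one, imK_one, neg_zero] at hre hI hJ hK
  by_contra h0
  have him : q.imI = 0 ∧ q.imJ = 0 ∧ q.imK = 0 := by
    refine ⟨?_, ?_, ?_⟩ <;>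
    · apply (mul_eq_zero.mp _).resolve_left h0
      linarith
  nlinarith [sq_nonneg q.re]

lemma qi_mul_qi : qi * qi = -1 := by
  ext <;> simp only [re_mul, imI_mul, imJ_mul, imK_mul] <;> simp [qi]

namespace SU2

lemma normSq_coe (x : SU2) : normSq (x : ℍ[ℝ]) = 1 := by
  rw [normSq_eq_norm_mul_self, mem_sphere_zero_iff_norm.mp x.2, one_mul]

lemma commute_iff {x y : SU2} : Commute x y ↔ Commute (x : ℍ[ℝ]) y := by
  simp only [Commute, SemiconjBy, Subtype.ext_iff, Metric.unitSphere.coe_mul]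

lemma coe_eq_one_or_neg_one_of_im_eq_zero {v : SU2} (hv : (v : ℍ[ℝ]).im = 0) :
    (v : ℍ[ℝ]) = 1 ∨ (v : ℍ[ℝ]) = -1 := by
  have hre : (v : ℍ[ℝ]) = ((v : ℍ[ℝ]).re : ℍ[ℝ]) := by
    rw [← re_add_im (v : ℍ[ℝ]), hv, add_zero, re_coe]
  have hsq : (v : ℍ[ℝ]).re * (v : ℍ[ℝ]).re = 1 := by
    rw [← sq, ← Quaternion.normSq_coe, ← hre, normSq_coe]
  rcases mul_self_eq_one_iff.mp hsq with h | h <;> rw [hre, h] <;> simp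

lemma coe_mul_self_eq_neg_one_of_re_eq_zero {p : SU2} (hp : (p : ℍ[ℝ]).re = 0) :
    (p : ℍ[ℝ]) * p = -1 := by
  have him : (p : ℍ[ℝ]).im = p := by
    rw [← re_add_im (p : ℍ[ℝ]), hp, coe_zero, zero_add, im_idem]
  rw [← sq, ← him, im_sq, him, normSq_coe, coe_one]

lemma exists_conj_eq_iSU {p : SU2} (hp : (p : ℍ[ℝ]).re = 0) :
    ∃ w : SU2, w * p * w⁻¹ = iSU := by
  simp only [mul_inv_eq_iff_eq_mul, Subtype.ext_iff, Metric.unitSphere.coe_mul]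
  by_cases hpi : (p : ℍ[ℝ]) = -qi
  · refine ⟨jSU, ?_⟩
    rw [hpi]
    ext <;> simp only [re_mul, imI_mul, imJ_mul, imK_mul, re_neg, imI_neg, imJ_neg, imK_neg] <;>
      simp [iSU, jSU, qi, qj]
  · -- `qi + p` is a nonzero multiple of the rotation taking `p` to `qi`
    set s : ℍ[ℝ] := qi + p
    have hs : s ≠ 0 := fun h0 => hpi (eq_neg_of_add_eq_zero_right h0)
    refine ⟨⟨‖s‖⁻¹ • s, mem_sphere_zero_iff_norm.mpr (norm_smul_inv_norm hs)⟩, ?_⟩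
    change (‖s‖⁻¹ • s) * p = qi * (‖s‖⁻¹ • s)
    rw [smul_mul_assoc, mul_smul_comm, add_mul, mul_add, coe_mul_self_eq_neg_one_of_re_eq_zero hp,
      qi_mul_qi, add_comm]

end SU2

lemma mem_circleSet_of_commute_iSU {x : SU2} (h : Commute iSU x) : x ∈ circleSet := by
  have h' : qi * (x : ℍ[ℝ]) = x * qi := (SU2.commute_iff.mp h).eq
  have hJ := congrArg (·.imJ) h'
  have hK := congrArg (·.imK) h'
  simp only [imJ_mul, imK_mul] at hJ hK
  simp only [qi] at hJ hK
  constructor <;> linarith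

lemma coe_jSU_inv : ((jSU⁻¹ : SU2) : ℍ[ℝ]) = -qj := by
  rw [Metric.unitSphere.coe_inv]
  refine inv_eq_of_mul_eq_one_right ?_
  ext <;> simp only [re_mul, imI_mul, imJ_mul, imK_mul, re_neg, imI_neg, imJ_neg, imK_neg] <;>
    simp [jSU, qj]

lemma mem_jSU_mul_circleSet_of_anticommute_iSU {x : SU2} (h : iSU * x = negOne * x * iSU) :
    x ∈ (fun w => jSU * w) '' circleSet := by
  have h' : qi * (x : ℍ[ℝ]) = -(x * qi) := by
    simpa [iSU, negOne] using congrArg Subtype.val h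
  have hre := congrArg (·.re) h'
  have hI := congrArg (·.imI) h'
  simp only [re_mul, imI_mul, re_neg, imI_neg] at hre hI
  simp only [qi] at hre hI
  refine ⟨jSU⁻¹ * x, ⟨?_, ?_⟩, mul_inv_cancel_left _ _⟩ <;>
  · simp only [Metric.unitSphere.coe_mul, coe_jSU_inv, neg_mul, imJ_neg, imK_neg, imJ_mul,
      imK_mul]
    simp [qj]
    linarith

lemma SU2.exists_conj_mem_circleSet_of_commute {v : SU2} (hv : (v : ℍ[ℝ]).im ≠ 0) :
    ∃ w : SU2, ∀ x : SU2, Commute v x → w * x * w⁻¹ ∈ circleSet := by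
  let p : SU2 := ⟨‖(v : ℍ[ℝ]).im‖⁻¹ • (v : ℍ[ℝ]).im,
    mem_sphere_zero_iff_norm.mpr (norm_smul_inv_norm hv)⟩
  obtain ⟨w, hw⟩ := SU2.exists_conj_eq_iSU (p := p) (by simp [p])
  refine ⟨w, fun x hx => mem_circleSet_of_commute_iSU ?_⟩
  rw [← hw]
  refine (SU2.commute_iff.mpr ?_).conj w
  have him : Commute (v : ℍ[ℝ]).im x := by
    rw [← sub_re_self]
    exact (SU2.commute_iff.mp hx).sub_left (coe_commute _ _)
  exact him.smul_left _

lemma sgn_commute (s : ℤˣ) (x : SU2) : Commute (sgn s) x := by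
  rcases Int.units_eq_one_or s with rfl | rfl
  · exact Commute.one_left x
  · exact SU2.commute_iff.mpr (Commute.neg_one_left _)

lemma sgn_mul_self (s : ℤˣ) : sgn s * sgn s = 1 := by
  rcases Int.units_eq_one_or s with rfl | rfl
  · exact mul_one _
  · exact Subtype.ext (neg_one_mul (-1 : ℍ[ℝ]) |>.trans (neg_neg 1))

lemma sgn_eq_one_iff {s : ℤˣ} : sgn s = 1 ↔ s = 1 := by
  refine ⟨fun hs => ?_, fun hs => by rw [hs, sgn, if_pos rfl]⟩
  by_contra hne
  rw [sgn, if_neg hne, Subtype.ext_iff] at hs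
  have := congrArg (·.re) hs
  norm_num [negOne] at this

lemma conj_sgn_mul (s : ℤˣ) (w x : SU2) :
    w * (sgn s * x) * w⁻¹ = sgn s * (w * x * w⁻¹) := by
  rw [← mul_assoc w, ← (sgn_commute s w).eq, mul_assoc (sgn s), mul_assoc (sgn s), mul_assoc]

lemma mem_binDihSet_of_conj_iSU_eq_sgn_mul {b : SU2} {s : ℤˣ}
    (h : iSU * b * iSU⁻¹ = sgn s * b) :
    b ∈ binDihSet := by
  rw [mul_inv_eq_iff_eq_mul] at h
  rcases Int.units_eq_one_or s with rfl | rfl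
  · rw [sgn, if_pos rfl, one_mul] at h
    exact Or.inl (mem_circleSet_of_commute_iSU h)
  · exact Or.inr (mem_jSU_mul_circleSet_of_anticommute_iSU h)

section Twist

variable {G : Type*} [Group G] {A : G →* SU2} {χ : G →* ℤˣ} {u : SU2}

lemma commute_mul_self_of_twist (h : ∀ g : G, sgn (χ g) * A g = u * A g * u⁻¹) (g : G) :
    Commute (u * u) (A g) := by
  refine mul_inv_eq_iff_eq_mul.mp ?_
  calc u * u * A g * (u * u)⁻¹ = u * (u * A g * u⁻¹) * u⁻¹ := by group
    _ = sgn (χ g) * (sgn (χ g) * A g) := by rw [← h g, conj_sgn_mul, ← h g]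
    _ = A g := by rw [← mul_assoc, sgn_mul_self, one_mul]

lemma im_mul_self_eq_zero_of_twist (hA : IsIrredRep A)
    (h : ∀ g : G, sgn (χ g) * A g = u * A g * u⁻¹) : ((u : ℍ[ℝ]) * u).im = 0 := by
  by_contra hne
  obtain ⟨w, hw⟩ := SU2.exists_conj_mem_circleSet_of_commute (v := u * u) hne
  exact hA ⟨w, fun g => hw _ (commute_mul_self_of_twist h g)⟩

lemma eq_one_of_twist_of_forall_commute (h : ∀ g : G, sgn (χ g) * A g = u * A g * u⁻¹)
    (hu : ∀ x, Commute u x) : χ = 1 := by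
  refine MonoidHom.ext fun g => sgn_eq_one_iff.mp ?_
  have := h g
  rwa [(hu _).eq, mul_inv_cancel_right, mul_eq_right] at this

lemma coe_mul_self_eq_neg_one_of_twist (hA : IsIrredRep A) (hχ : χ ≠ 1)
    (h : ∀ g : G, sgn (χ g) * A g = u * A g * u⁻¹) : (u : ℍ[ℝ]) * u = -1 := by
  rcases SU2.coe_eq_one_or_neg_one_of_im_eq_zero (v := u * u)
    (im_mul_self_eq_zero_of_twist hA h) with hsq | hsq
  · refine absurd (eq_one_of_twist_of_forall_commute h fun x => SU2.commute_iff.mpr ?_) hχ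
    rcases mul_self_eq_one_iff.mp hsq with hu | hu <;> rw [hu]
    exacts [Commute.one_left _, Commute.neg_one_left _]
  · exact hsq

end Twist

/-- If `A : G →* SU(2)` is irreducible, `χ : G →* {±1}` is nontrivial and
`χ·A = u·A·u⁻¹` pointwise, then `u ^ 2 = -1` and, after conjugation, the image of `A`
lies in the binary dihedral group `S¹ ∪ j·S¹`. -/
theorem twist_conjugate_binary_dihedral {G : Type*} [Group G]
    (A : G →* SU2) (hA : IsIrredRep A) (χ : G →* ℤˣ) (hχ : χ ≠ 1) (u : SU2)
    (h : ∀ g : G, sgn (χ g) * A g = u * A g * u⁻¹) :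
    (u : ℍ[ℝ]) ^ 2 = -1 ∧ ∃ w : SU2, ∀ g : G, w * A g * w⁻¹ ∈ binDihSet := by
  have hu : (u : ℍ[ℝ]) * u = -1 := coe_mul_self_eq_neg_one_of_twist hA hχ h
  obtain ⟨w, hw⟩ := SU2.exists_conj_eq_iSU (re_eq_zero_of_mul_self_eq_neg_one hu)
  refine ⟨by rw [sq, hu], w, fun g => ?_⟩
  refine mem_binDihSet_of_conj_iSU_eq_sgn_mul (s := χ g) ?_
  calc iSU * (w * A g * w⁻¹) * iSU⁻¹ = w * (u * A g * u⁻¹) * w⁻¹ := by rw [← hw]; group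
    _ = sgn (χ g) * (w * A g * w⁻¹) := by rw [← h g, conj_sgn_mul]
end

section
/- Let G be a group such that the abelianization G/[G,G] is infinite cyclic and the commutator subgroup [G,G] is perfect. Then there is no pair (A, χ) where A : G → SU(2) is an irreducible homomorphism, χ : G → {±1} is a nontrivial homomorphism, and χ·A is conjugate to A in SU(2). -/
open Quaternion

/-!
If `u` conjugates `A` to `χ·A` with `χ` nontrivial, then `u` is not real: a real `u` is
central, and `χ t = -1` would give `-A t = A t`. Since `χ` kills `[G,G]`, the group `A([G,G])`
lies in the centraliser of the non-real quaternion `u`, which is the commutative plane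
`ℝ + ℝu`. As `[G,G]` is perfect, `A` is trivial on it, so `A` has abelian image, and
commuting unit quaternions can be simultaneously conjugated into `S¹`.
-/

namespace Quaternion

@[simp] theorem re_qi : qi.re = 0 := rfl
@[simp] theorem imI_qi : qi.imI = 1 := rfl
@[simp] theorem imJ_qi : qi.imJ = 0 := rfl
@[simp] theorem imK_qi : qi.imK = 0 := rfl

/-- Commuting with `u` forces `im x ∥ im u`, so `x = a + b u` with
`b = ⟪im x, im u⟫ / ‖im u‖²`. -/
theorem exists_eq_coe_add_smul_of_commute {x u : ℍ[ℝ]} (hu : u.im ≠ 0) (h : Commute x u) :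
    ∃ a b : ℝ, x = a + b • u := by
  have hS : u.imI ^ 2 + u.imJ ^ 2 + u.imK ^ 2 ≠ 0 := by
    simpa [normSq_def'] using mt normSq_eq_zero.mp hu
  have hI := congrArg QuaternionAlgebra.imI h.eq
  have hJ := congrArg QuaternionAlgebra.imJ h.eq
  have hK := congrArg QuaternionAlgebra.imK h.eq
  simp only [imI_mul, imJ_mul, imK_mul] at hI hJ hK
  obtain ⟨b, hb⟩ : ∃ b : ℝ, b * (u.imI ^ 2 + u.imJ ^ 2 + u.imK ^ 2) =
      x.imI * u.imI + x.imJ * u.imJ + x.imK * u.imK := ⟨_, div_mul_cancel₀ _ hS⟩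
  refine ⟨x.re - b * u.re, b, ?_⟩
  ext <;> simp only [re_add, re_coe, re_smul, imI_add, imI_coe, imI_smul, imJ_add, imJ_coe,
    imJ_smul, imK_add, imK_coe, imK_smul, smul_eq_mul, zero_add]
  · ring
  all_goals apply mul_right_cancel₀ hS
  · linear_combination (-u.imI) * hb + u.imJ / 2 * hK - u.imK / 2 * hJ
  · linear_combination (-u.imJ) * hb + u.imK / 2 * hI - u.imI / 2 * hK
  · linear_combination (-u.imK) * hb + u.imI / 2 * hJ - u.imJ / 2 * hI

theorem commute_of_commute_of_im_ne_zero {x y u : ℍ[ℝ]} (hu : u.im ≠ 0) (hx : Commute x u)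
    (hy : Commute y u) : Commute x y := by
  obtain ⟨a, b, rfl⟩ := exists_eq_coe_add_smul_of_commute hu hx
  obtain ⟨a', b', rfl⟩ := exists_eq_coe_add_smul_of_commute hu hy
  exact (coe_commute a _).add_left
    (((coe_commute a' u).symm.add_right ((Commute.refl u).smul_right b')).smul_left b)

/-- For a pure quaternion `x` with `‖x‖ = s`, `(x + s i) x = s i (x + s i)` because
`x² = -s² = (s i)²`; the witness is `im q + ‖im q‖ i`, nonzero unless `im q` is a multiple
of `i`. -/
theorem exists_ne_zero_semiconjBy_re_add_norm_im_smul_qi (q : ℍ[ℝ])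
    (hq : ¬(q.imJ = 0 ∧ q.imK = 0)) : ∃ g ≠ 0, SemiconjBy g q (q.re + ‖q.im‖ • qi) := by
  have hs : ‖q.im‖ ^ 2 = q.imI ^ 2 + q.imJ ^ 2 + q.imK ^ 2 := by
    rw [sq, ← normSq_eq_norm_mul_self, normSq_def']
    simp
  refine ⟨q.im + ‖q.im‖ • qi, fun h => hq ?_, ?_⟩
  · simpa using And.intro (congrArg QuaternionAlgebra.imJ h) (congrArg QuaternionAlgebra.imK h)
  · ext <;> simp
    · linear_combination hs
    all_goals ring

end Quaternion

namespace SU2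

theorem commute_coe_iff {x y : SU2} : Commute (x : ℍ[ℝ]) y ↔ Commute x y := by
  simp only [Commute, SemiconjBy, ← Metric.unitSphere.coe_mul, Subtype.coe_inj]

theorem commute_of_im_eq_zero {u : SU2} (hu : (u : ℍ[ℝ]).im = 0) (x : SU2) : Commute u x := by
  rw [← commute_coe_iff, ← re_add_im (u : ℍ[ℝ]), hu, add_zero]
  exact coe_commute _ _

theorem commute_of_commute_of_im_ne_zero {x y u : SU2} (hu : (u : ℍ[ℝ]).im ≠ 0)
    (hx : Commute x u) (hy : Commute y u) : Commute x y :=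
  commute_coe_iff.mp <| Quaternion.commute_of_commute_of_im_ne_zero hu
    (commute_coe_iff.mpr hx) (commute_coe_iff.mpr hy)

theorem negOne_ne_one : negOne ≠ 1 := by
  intro h
  have := congrArg (fun z : SU2 => (z : ℍ[ℝ]).re) h
  norm_num [negOne] at this

theorem im_ne_zero_of_negOne_mul_eq_conj {x u : SU2} (h : negOne * x = u * x * u⁻¹) :
    (u : ℍ[ℝ]).im ≠ 0 := by
  intro hu
  rw [(commute_of_im_eq_zero hu x).eq, mul_inv_cancel_right, mul_eq_right] at h
  exact negOne_ne_one h

theorem exists_conj_mem_circleSet (q : SU2) : ∃ g : SU2, g * q * g⁻¹ ∈ circleSet := by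
  by_cases hq : (q : ℍ[ℝ]).imJ = 0 ∧ (q : ℍ[ℝ]).imK = 0
  · exact ⟨1, by simpa [circleSet] using hq⟩
  obtain ⟨g, hg, hgq⟩ := exists_ne_zero_semiconjBy_re_add_norm_im_smul_qi _ hq
  have hg' : ‖g‖⁻¹ • g ≠ 0 := smul_ne_zero (inv_ne_zero (norm_ne_zero_iff.mpr hg)) hg
  refine ⟨⟨‖g‖⁻¹ • g, by simp [norm_smul, hg]⟩, ?_⟩
  suffices h : ‖g‖⁻¹ • g * q * (‖g‖⁻¹ • g)⁻¹ = (q : ℍ[ℝ]).re + ‖(q : ℍ[ℝ]).im‖ • qi by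
    simp only [circleSet, Set.mem_ofPred_eq, Metric.unitSphere.coe_mul,
      Metric.unitSphere.coe_inv, h]
    simp
  rw [mul_inv_eq_iff_eq_mul₀ hg', smul_mul_assoc, hgq.eq, mul_smul_comm]

theorem exists_conj_forall_mem_circleSet_of_commute {ι : Type*} (f : ι → SU2)
    (hf : ∀ i j, Commute (f i) (f j)) : ∃ g : SU2, ∀ i, g * f i * g⁻¹ ∈ circleSet := by
  by_cases h : ∃ i₀, (f i₀ : ℍ[ℝ]).im ≠ 0
  · obtain ⟨i₀, hi₀⟩ := h
    obtain ⟨g, hg⟩ := exists_conj_mem_circleSet (f i₀)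
    refine ⟨g, fun i => ?_⟩
    obtain ⟨a, b, hab⟩ :=
      exists_eq_coe_add_smul_of_commute hi₀ (commute_coe_iff.mpr (hf i i₀))
    have hconj :
        ((g * f i * g⁻¹ : SU2) : ℍ[ℝ]) = a + b • ((g * f i₀ * g⁻¹ : SU2) : ℍ[ℝ]) := by
      simp only [Metric.unitSphere.coe_mul, Metric.unitSphere.coe_inv, hab, mul_add, add_mul,
        mul_smul_comm, smul_mul_assoc]
      rw [← coe_commutes, mul_inv_cancel_right₀ (ne_zero_of_mem_unit_sphere g)]
    simp only [circleSet, Set.mem_ofPred_eq, hconj] at hg ⊢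
    simp only [imJ_add, imK_add, imJ_coe, imK_coe, imJ_smul, imK_smul, hg.1, hg.2, smul_zero,
      add_zero, and_self]
  · push Not at h
    refine ⟨1, fun i => ?_⟩
    simpa [circleSet] using
      ⟨congrArg QuaternionAlgebra.imJ (h i), congrArg QuaternionAlgebra.imK (h i)⟩

end SU2

theorem MonoidHom.commutator_le_ker_iff {G H : Type*} [Group G] [Group H] (f : G →* H) :
    commutator G ≤ f.ker ↔ ∀ x y, Commute (f x) (f y) := by
  simp only [commutator_def, Subgroup.commutator_le, Subgroup.mem_top, forall_const,
    MonoidHom.mem_ker, map_commutatorElement, commutatorElement_eq_one_iff_mul_comm]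
  rfl

theorem MonoidHom.eq_one_of_commutator_eq_top {G H : Type*} [Group G] [Group H] {f : G →* H}
    (hG : commutator G = ⊤) (hf : ∀ x y, Commute (f x) (f y)) : f = 1 := by
  ext x
  exact (f.commutator_le_ker_iff.mpr hf) (hG ▸ Subgroup.mem_top x)

theorem sgn_one : sgn 1 = 1 := if_pos rfl

theorem sgn_of_ne_one {s : ℤˣ} (h : s ≠ 1) : sgn s = negOne := if_neg h

theorem no_twist_fixed_irreducible_general {G : Type*} [Group G]
    (h2 : commutator ↥(commutator G) = ⊤) :
    ¬ ∃ (A : G →* SU2) (χ : G →* ℤˣ) (u : SU2),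
        IsIrredRep A ∧ χ ≠ 1 ∧ ∀ g : G, sgn (χ g) * A g = u * A g * u⁻¹ := by
  rintro ⟨A, χ, u, hirr, hχ, hrel⟩
  obtain ⟨t, ht⟩ : ∃ t, χ t ≠ 1 := by
    contrapose! hχ
    exact MonoidHom.ext hχ
  have hu : (u : ℍ[ℝ]).im ≠ 0 :=
    SU2.im_ne_zero_of_negOne_mul_eq_conj (sgn_of_ne_one ht ▸ hrel t)
  have hcomm : ∀ g ∈ commutator G, Commute (A g) u := fun g hg => by
    have h := hrel g
    rw [Abelianization.commutator_subset_ker χ hg, sgn_one, one_mul, eq_mul_inv_iff_mul_eq] at h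
    exact h
  have hA : A.comp (commutator G).subtype = 1 :=
    MonoidHom.eq_one_of_commutator_eq_top h2 fun x y =>
      SU2.commute_of_commute_of_im_ne_zero hu (hcomm x x.2) (hcomm y y.2)
  have hker : commutator G ≤ A.ker := fun g hg =>
    A.mem_ker.mpr (DFunLike.congr_fun hA ⟨g, hg⟩)
  exact hirr (SU2.exists_conj_forall_mem_circleSet_of_commute A (A.commutator_le_ker_iff.mp hker))

/-- If the abelianization of `G` is infinite cyclic and the commutator subgroup of `G`
is perfect, then there is no irreducible `A : G →* SU(2)` together with a nontrivial
character `χ : G →* {±1}` such that `χ·A` is conjugate to `A` in `SU(2)`. -/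
theorem no_twist_fixed_irreducible {G : Type*} [Group G]
    (h1 : Nonempty (Abelianization G ≃* Multiplicative ℤ))
    (h2 : commutator ↥(commutator G) = ⊤) :
    ¬ ∃ (A : G →* SU2) (χ : G →* ℤˣ) (u : SU2),
        IsIrredRep A ∧ χ ≠ 1 ∧ ∀ g : G, sgn (χ g) * A g = u * A g * u⁻¹ :=
  no_twist_fixed_irreducible_general h2
end
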